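/- Let ω be an invertible antisymmetric real n×n matrix and α an antisymmetric real n×n matrix. Let T_p (p ≥ 1) be defined by T_1 = (1/2)·α and T_p = (1/2)·Σ_{l=1}^{p-1} T_l ⋄ T_{p-l} for p ≥ 2. Define matrices V_p (p ≥ 0) by V_0 = -ω and, for p ≥ 1, V_p = Σ_{l=1}^{p} T_l ⋄ V_{p-l}. Then for every p ≥ 1, V_p = κ_p · α^{⋄p}, where κ_p = binomial(2p, p)/4^p (the Taylor coefficients of 1/√(1-x)). -/
import Mathlib

open Matrix

/-- Covariant diamond contraction: `(α ⋄ β) = αᵀ * ω⁻¹ * β`. -/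
noncomputable def diamondCov {n : ℕ} (ω α β : Matrix (Fin n) (Fin n) ℝ) :
    Matrix (Fin n) (Fin n) ℝ :=
  αᵀ * ω⁻¹ * β

/-- Diamond powers: `α^{⋄1} = α`, `α^{⋄(k+1)} = α ⋄ α^{⋄k}`. -/
noncomputable def diamondPow {n : ℕ} (ω α : Matrix (Fin n) (Fin n) ℝ) :
    ℕ → Matrix (Fin n) (Fin n) ℝ
  | 0 => 1
  | 1 => α
  | (k + 2) => diamondCov ω α (diamondPow ω α (k + 1))

section Aux

lemma conv_catalan_centralBinom (m : ℕ) :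
    2 * ∑ i ∈ Finset.range (m+1), catalan i * Nat.centralBinom (m - i)
      = Nat.centralBinom (m+1) := by
  have hrefl : ∑ i ∈ Finset.range (m+1), catalan i * Nat.centralBinom (m - i)
      = ∑ i ∈ Finset.range (m+1), catalan (m - i) * Nat.centralBinom i := by
    rw [← Finset.sum_range_reflect]
    refine Finset.sum_congr rfl fun i hi => ?_
    have hi' : i ≤ m := by simpa [Nat.lt_succ_iff] using hi
    congr 2 <;> omega
  have key : 2 * ∑ i ∈ Finset.range (m+1), catalan i * Nat.centralBinom (m - i)
      = (m + 2) * ∑ i ∈ Finset.range (m+1), catalan i * catalan (m - i) := by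
    rw [two_mul]
    nth_rewrite 2 [hrefl]
    rw [Finset.mul_sum, ← Finset.sum_add_distrib]
    refine Finset.sum_congr rfl fun i hi => ?_
    have hi' : i ≤ m := by simpa [Nat.lt_succ_iff] using hi
    rw [← succ_mul_catalan_eq_centralBinom, ← succ_mul_catalan_eq_centralBinom]
    obtain ⟨k, rfl⟩ := Nat.exists_eq_add_of_le hi'
    simp only [Nat.add_sub_cancel_left]
    ring
  rw [key, ← succ_mul_catalan_eq_centralBinom]
  congr 1
  rw [catalan_succ]
  rw [Finset.sum_range fun i => catalan i * catalan (m - i)]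

variable {n : ℕ} (ω α : Matrix (Fin n) (Fin n) ℝ)

lemma dc_smul_left (c : ℝ) (x y : Matrix (Fin n) (Fin n) ℝ) :
    diamondCov ω (c • x) y = c • diamondCov ω x y := by
  simp [diamondCov, Matrix.transpose_smul, Matrix.smul_mul]

lemma dc_smul_right (c : ℝ) (x y : Matrix (Fin n) (Fin n) ℝ) :
    diamondCov ω x (c • y) = c • diamondCov ω x y := by
  simp [diamondCov, Matrix.mul_smul]

lemma inv_transpose_skew (hω : IsUnit ω.det) (hωskew : ωᵀ = -ω) : (ω⁻¹)ᵀ = -ω⁻¹ := by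
  rw [Matrix.transpose_nonsing_inv, hωskew]
  refine Matrix.inv_eq_left_inv ?_
  rw [Matrix.neg_mul, Matrix.mul_neg, neg_neg]
  exact Matrix.nonsing_inv_mul ω hω

lemma dc_shift (hω : IsUnit ω.det) (hωskew : ωᵀ = -ω) (hα : αᵀ = -α)
    (x y : Matrix (Fin n) (Fin n) ℝ) :
    diamondCov ω (diamondCov ω α x) y = diamondCov ω x (diamondCov ω α y) := by
  have hM : (ω⁻¹)ᵀ = -ω⁻¹ := inv_transpose_skew ω hω hωskew
  simp [diamondCov, Matrix.transpose_mul, Matrix.transpose_neg, hM, hα, Matrix.mul_assoc]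

lemma dp_one : diamondPow ω α 1 = α := rfl

lemma dp_succ_eq (k : ℕ) (hk : 1 ≤ k) :
    diamondPow ω α (k + 1) = diamondCov ω α (diamondPow ω α k) := by
  cases k with
  | zero => omega
  | succ j => rfl

lemma dp_add (hω : IsUnit ω.det) (hωskew : ωᵀ = -ω) (hα : αᵀ = -α) :
    ∀ a, 1 ≤ a → ∀ b, 1 ≤ b →
      diamondCov ω (diamondPow ω α a) (diamondPow ω α b) = diamondPow ω α (a + b) := by
  intro a ha
  induction a, ha using Nat.le_induction with
  | base =>
    intro b hb
    rw [dp_one, ← dp_succ_eq ω α b hb, add_comm]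
  | succ a ha ih =>
    intro b hb
    rw [dp_succ_eq ω α a ha, dc_shift ω α hω hωskew hα, ← dp_succ_eq ω α b hb,
      ih (b+1) (by omega), show a + (b + 1) = a + 1 + b by omega]

lemma dc_neg_omega (hω : IsUnit ω.det) (hα : αᵀ = -α) :
    diamondCov ω α (-ω) = α := by
  rw [diamondCov, Matrix.mul_neg, Matrix.mul_assoc, Matrix.nonsing_inv_mul ω hω,
    Matrix.mul_one, hα, neg_neg]

lemma dp_neg_omega (hω : IsUnit ω.det) (hωskew : ωᵀ = -ω) (hα : αᵀ = -α) :
    ∀ a, 1 ≤ a → diamondCov ω (diamondPow ω α a) (-ω) = diamondPow ω α a := by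
  intro a ha
  induction a, ha using Nat.le_induction with
  | base => exact dc_neg_omega ω α hω hα
  | succ a ha ih =>
    rw [dp_succ_eq ω α a ha, dc_shift ω α hω hωskew hα, dc_neg_omega ω α hω hα]
    have h := dp_add ω α hω hωskew hα a ha 1 le_rfl
    rw [dp_one] at h
    rw [h, dp_succ_eq ω α a ha]

end Aux

theorem V_eq_kappa_diamondPow {n : ℕ} (ω α : Matrix (Fin n) (Fin n) ℝ)
    (hω : IsUnit ω.det) (hωskew : ωᵀ = -ω) (hα : αᵀ = -α)
    (T V : ℕ → Matrix (Fin n) (Fin n) ℝ)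
    (hT1 : T 1 = (1/2 : ℝ) • α)
    (hTrec : ∀ p : ℕ, 2 ≤ p →
      T p = (1/2 : ℝ) • ∑ l ∈ Finset.Ico 1 p, diamondCov ω (T l) (T (p - l)))
    (hV0 : V 0 = -ω)
    (hVrec : ∀ p : ℕ, 1 ≤ p →
      V p = ∑ l ∈ Finset.Icc 1 p, diamondCov ω (T l) (V (p - l))) :
    ∀ p : ℕ, 1 ≤ p →
      V p = ((Nat.choose (2 * p) p : ℝ) / 4 ^ p) • diamondPow ω α p := by
  set t : ℕ → ℝ := fun p => 2 * (catalan (p-1) : ℝ) / 4 ^ p with ht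
  set κ : ℕ → ℝ := fun p => (Nat.centralBinom p : ℝ) / 4 ^ p with hκ
  -- T p = t p • diamondPow p
  have hTc : ∀ p : ℕ, 1 ≤ p → T p = t p • diamondPow ω α p := by
    intro p
    induction p using Nat.strong_induction_on with
    | _ p ih =>
      intro hp
      rcases eq_or_lt_of_le hp with h1 | h2
      · rw [← h1, hT1, dp_one]
        norm_num [ht]
      · have hp2 : 2 ≤ p := h2
        rw [hTrec p hp2]
        have hsum : ∑ l ∈ Finset.Ico 1 p, diamondCov ω (T l) (T (p - l))
            = (∑ l ∈ Finset.Ico 1 p, t l * t (p - l)) • diamondPow ω α p := by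
          rw [Finset.sum_smul]
          refine Finset.sum_congr rfl fun l hl => ?_
          obtain ⟨hl1, hl2⟩ := Finset.mem_Ico.mp hl
          rw [ih l hl2 hl1, ih (p - l) (by omega) (by omega), dc_smul_left, dc_smul_right,
            smul_smul, dp_add ω α hω hωskew hα l hl1 (p - l) (by omega),
            show l + (p - l) = p by omega]
        rw [hsum, smul_smul]
        congr 1
        -- scalar identity for t
        have hnat : ∑ l ∈ Finset.Ico 1 p, (catalan (l-1) * catalan (p - l - 1))
            = catalan (p - 1) := by
          rw [Finset.sum_Ico_eq_sum_range]
          have hbody : ∀ i ∈ Finset.range (p - 1),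
              catalan (1 + i - 1) * catalan (p - (1 + i) - 1)
                = catalan i * catalan (p - 2 - i) := by
            intro i hi
            congr 2 <;> omega
          rw [Finset.sum_congr rfl hbody, show p - 1 = (p - 2) + 1 by omega,
            catalan_succ (p - 2)]
          exact Finset.sum_range _
        have hterm : ∀ l ∈ Finset.Ico 1 p, t l * t (p - l)
            = 4 / 4 ^ p * ((catalan (l-1) * catalan (p - l - 1) : ℕ) : ℝ) := by
          intro l hl
          obtain ⟨hl1, hl2⟩ := Finset.mem_Ico.mp hl
          have h4 : (4:ℝ) ^ l * 4 ^ (p - l) = 4 ^ p := by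
            rw [← pow_add]; congr 1; omega
          simp only [ht, Nat.cast_mul]
          field_simp
          rw [← h4]
          ring
        rw [Finset.sum_congr rfl hterm, ← Finset.mul_sum, ← Nat.cast_sum, hnat, ht]
        have h4p : (4:ℝ) ^ p ≠ 0 := by positivity
        field_simp
        ring
  -- main claim
  have hmain : ∀ p : ℕ, 1 ≤ p → V p = κ p • diamondPow ω α p := by
    intro p
    induction p using Nat.strong_induction_on with
    | _ p ih =>
      intro hp
      rw [hVrec p hp]
      rw [show Finset.Icc 1 p = Finset.Ico 1 (p + 1) from (Finset.Ico_add_one_right_eq_Icc 1 p).symm,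
        Finset.sum_Ico_succ_top hp]
      have hlast : diamondCov ω (T p) (V (p - p)) = t p • diamondPow ω α p := by
        rw [Nat.sub_self, hV0, hTc p hp, dc_smul_left,
          dp_neg_omega ω α hω hωskew hα p hp]
      have hrest : ∑ l ∈ Finset.Ico 1 p, diamondCov ω (T l) (V (p - l))
          = (∑ l ∈ Finset.Ico 1 p, t l * κ (p - l)) • diamondPow ω α p := by
        rw [Finset.sum_smul]
        refine Finset.sum_congr rfl fun l hl => ?_
        obtain ⟨hl1, hl2⟩ := Finset.mem_Ico.mp hl
        rw [hTc l hl1, ih (p - l) (by omega) (by omega), dc_smul_left, dc_smul_right,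
          smul_smul, dp_add ω α hω hωskew hα l hl1 (p - l) (by omega),
          show l + (p - l) = p by omega]
      rw [hlast, hrest, ← add_smul]
      congr 1
      -- scalar identity: ∑_{l=1}^{p-1} t l κ (p-l) + t p = κ p
      obtain ⟨m, rfl⟩ : ∃ m, p = m + 1 := ⟨p - 1, by omega⟩
      have hterm : ∀ l ∈ Finset.Ico 1 (m + 1), t l * κ (m + 1 - l)
          = 2 / 4 ^ (m + 1)
            * ((catalan (l-1) * Nat.centralBinom (m + 1 - l) : ℕ) : ℝ) := by
        intro l hl
        obtain ⟨hl1, hl2⟩ := Finset.mem_Ico.mp hl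
        have h4 : (4:ℝ) ^ l * 4 ^ (m + 1 - l) = 4 ^ (m + 1) := by
          rw [← pow_add]; congr 1; omega
        simp only [ht, hκ, Nat.cast_mul]
        field_simp
        rw [← h4]
        ring
      have htp : t (m + 1) = 2 / 4 ^ (m + 1)
          * ((catalan m * Nat.centralBinom 0 : ℕ) : ℝ) := by
        simp [ht, Nat.centralBinom_zero]
        ring
      rw [Finset.sum_congr rfl hterm, htp, ← Finset.mul_sum, ← Nat.cast_sum, ← mul_add,
        ← Nat.cast_add]
      have hIco : (∑ l ∈ Finset.Ico 1 (m + 1),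
            catalan (l-1) * Nat.centralBinom (m + 1 - l))
            + catalan m * Nat.centralBinom 0
          = ∑ i ∈ Finset.range (m + 1), catalan i * Nat.centralBinom (m - i) := by
        rw [Finset.sum_Ico_eq_sum_range, Finset.sum_range_succ]
        congr 1
        · refine Finset.sum_congr (by congr 1) fun i hi => ?_
          have him : i < m + 1 - 1 := Finset.mem_range.mp hi
          congr 2 <;> omega
        · rw [Nat.sub_self]
      rw [hIco]
      have hconv := conv_catalan_centralBinom m
      have hhalf : ((∑ i ∈ Finset.range (m + 1),
            catalan i * Nat.centralBinom (m - i) : ℕ) : ℝ)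
          = (Nat.centralBinom (m + 1) : ℝ) / 2 := by
        rw [← hconv]
        push_cast
        ring
      rw [hhalf, hκ]
      have h4p : (4:ℝ) ^ (m + 1) ≠ 0 := by positivity
      field_simp
  intro p hp
  rw [hmain p hp]
  simp only [hκ, Nat.centralBinom_eq_two_mul_choose]
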